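/- arXiv:1907.00106 — 7 statements merged into one kernel-verified Lean document; each statement's English description precedes it below -/
import Mathlib

section
/- Define C_1 = (p_min + p_max)/2 and C_{v+1} = (p_min + p_max)/2 - (p_max - C_v)^2 / (2(p_max - p_min)) for v ≥ 1, where p_min < p_max. Then C_v converges to p_min as v tends to infinity. -/
set_option maxHeartbeats 1000000


theorem stmt_2 (pmin pmax : ℝ) (h : pmin < pmax) (C : ℕ → ℝ)
    (hC1 : C 1 = (pmin + pmax) / 2)
    (hrec : ∀ v, 1 ≤ v → C (v + 1) = (pmin + pmax) / 2 - (pmax - C v) ^ 2 / (2 * (pmax - pmin))) :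
    Filter.Tendsto C Filter.atTop (nhds pmin) := by
  set D : ℝ := pmax - pmin with hD
  have hD0 : 0 < D := by simp only [hD]; linarith
  have key : ∀ v, 1 ≤ v → 0 ≤ C v - pmin ∧ (C v - pmin) * ((v : ℝ) + 3) ≤ 2 * D := by
    intro v hv
    induction v, hv using Nat.le_induction with
    | base =>
      constructor
      · rw [hC1]; linarith
      · rw [hC1]; push_cast; nlinarith
    | succ n hn ih =>
      obtain ⟨ha, hb⟩ := ih
      set a : ℝ := C n - pmin with haa
      have hCn : pmax - C n = D - a := by
        show pmax - C n = (pmax - pmin) - (C n - pmin); ring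
      have hrw : C (n + 1) - pmin = a - a ^ 2 / (2 * D) := by
        rw [hrec n hn, hCn]
        field_simp
        ring
      have hn' : (1 : ℝ) ≤ (n : ℝ) := by exact_mod_cast hn
      set m : ℝ := (n : ℝ) + 3 with hm
      have hm4 : (4 : ℝ) ≤ m := by simp only [hm]; linarith
      have hx : 0 ≤ 2 * D - a * m := by linarith
      have hy : 0 ≤ 2 * D * m - a * m - 2 * D := by nlinarith
      have hP : 0 ≤ (m + 1) * ((2 * D - a * m) * (2 * D * m - a * m - 2 * D)) + 4 * D ^ 2 := by
        have h1 : (0 : ℝ) ≤ m + 1 := by linarith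
        have h2 : (0 : ℝ) ≤ 4 * D ^ 2 := by positivity
        exact add_nonneg (mul_nonneg h1 (mul_nonneg hx hy)) h2
      have hm2 : (0 : ℝ) < m ^ 2 := by nlinarith
      have heq : m ^ 2 * (a ^ 2 * (m + 1) - 2 * D * a * (m + 1) + 4 * D ^ 2) =
          (m + 1) * ((2 * D - a * m) * (2 * D * m - a * m - 2 * D)) + 4 * D ^ 2 := by ring
      have hT : 0 ≤ a ^ 2 * (m + 1) - 2 * D * a * (m + 1) + 4 * D ^ 2 := by
        nlinarith [hP, heq, hm2]
      have haD : a ≤ D := by nlinarith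
      constructor
      · rw [hrw]
        have : a ^ 2 / (2 * D) ≤ a := by
          rw [div_le_iff₀ (by linarith)]
          nlinarith
        linarith
      · rw [hrw]
        push_cast
        have hcast : ((n : ℝ) + 1 + 3) = m + 1 := by rw [hm]; ring
        rw [hcast, sub_mul, div_mul_eq_mul_div, sub_le_iff_le_add, ← sub_le_iff_le_add',
          le_div_iff₀ (by linarith : (0:ℝ) < 2 * D)]
        nlinarith [hT]
  have hsq : Filter.Tendsto (fun v : ℕ => C v - pmin) Filter.atTop (nhds 0) := by
    have hg : Filter.Tendsto (fun v : ℕ => 2 * D / ((v : ℝ) + 3)) Filter.atTop (nhds 0) := by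
      apply Filter.Tendsto.div_atTop tendsto_const_nhds
      exact Filter.tendsto_atTop_add_const_right _ 3 tendsto_natCast_atTop_atTop
    apply squeeze_zero' (g := fun v : ℕ => 2 * D / ((v : ℝ) + 3))
    · filter_upwards [Filter.eventually_ge_atTop 1] with v hv
      exact (key v hv).1
    · filter_upwards [Filter.eventually_ge_atTop 1] with v hv
      have := (key v hv).2
      rw [le_div_iff₀ (by positivity)]
      linarith
    · exact hg
  have : Filter.Tendsto (fun v : ℕ => (C v - pmin) + pmin) Filter.atTop (nhds (0 + pmin)) :=
    hsq.add tendsto_const_nhds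
  simpa using this
end

section
/- Let η and σ > 0 be such that prices are uniform on [p_min, p_max] with mean η = (p_min + p_max)/2 and standard deviation σ = (p_max - p_min)/(2√3). Define p_avg(σ) = sqrt(2ξ · 2√3 σ) + η - √3 σ for fixed ξ with 0 < ξ ≤ (2√3 σ)/8. Then p_avg is strictly decreasing in σ on the region where the constraint ξ ≤ √3σ/4 holds strictly. -/
theorem stmt_5 (η ξ : ℝ) (hξ : 0 < ξ) :
    StrictAntiOn
      (fun σ : ℝ => Real.sqrt (2 * ξ * (2 * Real.sqrt 3 * σ)) + η - Real.sqrt 3 * σ)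
      {σ : ℝ | 0 < σ ∧ ξ < Real.sqrt 3 * σ / 4} := by
  intro a ha b hb hab
  obtain ⟨ha0, haξ⟩ := ha
  obtain ⟨hb0, hbξ⟩ := hb
  set s := Real.sqrt 3 with hs
  have hs2 : s ^ 2 = 3 := Real.sq_sqrt (by norm_num)
  have hs0 : 0 < s := Real.sqrt_pos.mpr (by norm_num)
  simp only
  have key : Real.sqrt (2 * ξ * (2 * s * b)) < Real.sqrt (2 * ξ * (2 * s * a)) + s * (b - a) := by
    have h4ξ : 4 * ξ < Real.sqrt (2 * ξ * (2 * s * a)) := by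
      rw [show (4:ℝ) * ξ = Real.sqrt ((4*ξ)^2) from (Real.sqrt_sq (by positivity)).symm]
      apply Real.sqrt_lt_sqrt (by positivity)
      have : 4 * ξ < s * a := by linarith
      nlinarith [sq_nonneg (4*ξ - s*a)]
    have hrhs : 0 < Real.sqrt (2 * ξ * (2 * s * a)) + s * (b - a) := by
      have : 0 ≤ Real.sqrt (2 * ξ * (2 * s * a)) := Real.sqrt_nonneg _
      nlinarith
    rw [show Real.sqrt (2 * ξ * (2 * s * b)) < Real.sqrt (2 * ξ * (2 * s * a)) + s * (b - a)
        ↔ 2 * ξ * (2 * s * b) < (Real.sqrt (2 * ξ * (2 * s * a)) + s * (b - a))^2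
        from Real.sqrt_lt' hrhs]
    have hsq : Real.sqrt (2 * ξ * (2 * s * a)) ^ 2 = 2 * ξ * (2 * s * a) :=
      Real.sq_sqrt (by positivity)
    nlinarith [sq_nonneg (b - a), mul_pos (mul_pos hs0 (sub_pos.mpr hab)) (show (0:ℝ) < Real.sqrt (2 * ξ * (2 * s * a)) - 4 * ξ by linarith)]
  linarith
end

section
/- Let p_min < p_max, let τ > 0, and for v ≥ 1 let C_v satisfy C_1 = (p_min+p_max)/2 and C_{v+1} = (p_min+p_max)/2 - (p_max - C_v)^2/(2(p_max - p_min)), with C_0 := p_max. Define d_0 = (∏_{i=1}^{V-1}(p_max - C_i)) / ((1+τ)(p_max - p_min)^V) and d_v^1 = d_0 · ∏_{i=1}^{v} (p_max - p_min)/(p_max - C_i) for 0 ≤ v ≤ V-1. Then (1+τ) · Σ_{v=0}^{V-1} d_v^1 · (C_v^2 - p_min^2)/2 = C_V. -/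
theorem stmt_6 (pmin pmax τ : ℝ) (V : ℕ) (C : ℕ → ℝ)
    (h : pmin < pmax) (hτ : 0 < τ) (hV : 1 ≤ V)
    (hC0 : C 0 = pmax)
    (hC1 : C 1 = (pmin + pmax) / 2)
    (hrec : ∀ v, 1 ≤ v → C (v + 1) = (pmin + pmax) / 2 - (pmax - C v) ^ 2 / (2 * (pmax - pmin)))
    (hbound : ∀ v, 1 ≤ v → v ≤ V → pmin < C v ∧ C v < pmax) :
    (1 + τ) * ∑ v ∈ Finset.range V,
        ((∏ i ∈ Finset.Icc 1 (V - 1), (pmax - C i)) / ((1 + τ) * (pmax - pmin) ^ V)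
          * ∏ i ∈ Finset.Icc 1 v, (pmax - pmin) / (pmax - C i))
        * (C v ^ 2 - pmin ^ 2) / 2
      = C V := by
  have hΔ : (0:ℝ) < pmax - pmin := by linarith
  have hΔ' : pmax - pmin ≠ 0 := ne_of_gt hΔ
  have hτ1 : (1:ℝ) + τ ≠ 0 := by positivity
  -- key identity, by induction, no hbound needed
  have key : ∀ W, 1 ≤ W →
      ∑ v ∈ Finset.range W,
        (∏ i ∈ Finset.Ioc v (W - 1), (pmax - C i)) * (C v ^ 2 - pmin ^ 2)
          / (2 * (pmax - pmin) ^ (W - v)) = C W := by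
    intro W hW
    induction W, hW using Nat.le_induction with
    | base =>
      simp only [Finset.sum_range_one, Nat.sub_self, Finset.Ioc_self, Finset.prod_empty,
        one_mul, pow_one, hC0, hC1]
      field_simp
      ring
    | succ W hW ih =>
      rw [Finset.sum_range_succ]
      have hW1 : W + 1 - 1 = W := by omega
      rw [hW1]
      have hterm : ∀ v ∈ Finset.range W,
          (∏ i ∈ Finset.Ioc v W, (pmax - C i)) * (C v ^ 2 - pmin ^ 2)
            / (2 * (pmax - pmin) ^ (W + 1 - v))
          = (pmax - C W) / (pmax - pmin) *
            ((∏ i ∈ Finset.Ioc v (W - 1), (pmax - C i)) * (C v ^ 2 - pmin ^ 2)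
              / (2 * (pmax - pmin) ^ (W - v))) := by
        intro v hv
        rw [Finset.mem_range] at hv
        have hvW : v ≤ W - 1 := Nat.le_sub_one_of_lt hv
        have hWsucc : W = (W - 1) + 1 := (Nat.succ_pred_eq_of_pos (by omega)).symm
        have hprod := Finset.prod_Ioc_succ_top hvW (fun i => pmax - C i)
        rw [← hWsucc] at hprod
        have hexp : W + 1 - v = (W - v) + 1 := by omega
        rw [hprod, hexp, pow_succ]
        have hp : (pmax - pmin) ^ (W - v) ≠ 0 := pow_ne_zero _ hΔ'
        field_simp
        ring
      rw [Finset.sum_congr rfl hterm, ← Finset.mul_sum, ih]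
      simp only [Finset.Ioc_self, Finset.prod_empty, one_mul,
        Nat.add_sub_cancel_left, pow_one, hrec W hW]
      field_simp
      ring
  -- rewrite each term of the original sum
  have hterm : ∀ v ∈ Finset.range V,
      ((∏ i ∈ Finset.Icc 1 (V - 1), (pmax - C i)) / ((1 + τ) * (pmax - pmin) ^ V)
          * ∏ i ∈ Finset.Icc 1 v, (pmax - pmin) / (pmax - C i))
        * (C v ^ 2 - pmin ^ 2) / 2
      = (1 / (1 + τ)) *
        ((∏ i ∈ Finset.Ioc v (V - 1), (pmax - C i)) * (C v ^ 2 - pmin ^ 2)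
          / (2 * (pmax - pmin) ^ (V - v))) := by
    intro v hv
    rw [Finset.mem_range] at hv
    have hvV : v ≤ V - 1 := Nat.le_sub_one_of_lt hv
    have hA : ∀ i ∈ Finset.Icc 1 v, pmax - C i ≠ 0 := by
      intro i hi
      rw [Finset.mem_Icc] at hi
      have := (hbound i hi.1 (by omega)).2
      linarith
    have hAne : (∏ i ∈ Finset.Icc 1 v, (pmax - C i)) ≠ 0 := Finset.prod_ne_zero_iff.2 hA
    have e1 : ∀ n : ℕ, Finset.Icc 1 n = Finset.Ioc 0 n := fun n => Finset.Icc_add_one_left_eq_Ioc 0 n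
    have hsplit : ∏ i ∈ Finset.Icc 1 (V - 1), (pmax - C i)
        = (∏ i ∈ Finset.Icc 1 v, (pmax - C i)) * ∏ i ∈ Finset.Ioc v (V - 1), (pmax - C i) := by
      rw [e1, e1]
      exact (Finset.prod_Ioc_consecutive _ (Nat.zero_le v) hvV).symm
    have hratio : ∏ i ∈ Finset.Icc 1 v, ((pmax - pmin) / (pmax - C i))
        = (pmax - pmin) ^ v / ∏ i ∈ Finset.Icc 1 v, (pmax - C i) := by
      rw [Finset.prod_div_distrib, Finset.prod_const, Nat.card_Icc]
      norm_num
    have hpow : (pmax - pmin) ^ V = (pmax - pmin) ^ v * (pmax - pmin) ^ (V - v) := by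
      rw [← pow_add]
      congr 1
      omega
    rw [hsplit, hratio, hpow]
    have hp1 : (pmax - pmin) ^ v ≠ 0 := pow_ne_zero _ hΔ'
    have hp2 : (pmax - pmin) ^ (V - v) ≠ 0 := pow_ne_zero _ hΔ'
    field_simp
  rw [Finset.sum_congr rfl hterm, ← Finset.mul_sum, key V hV]
  field_simp
end

section
/- Let p_min < p_max, τ > 0, and V ≥ 1 with p_min < C_v < p_max for 1 ≤ v ≤ V-1 (and C_0 = p_max). Define d_0 = (∏_{i=1}^{V-1}(p_max - C_i)) / ((1+τ)(p_max - p_min)^V) and d_v^1 = d_0 ∏_{i=1}^{v} (p_max - p_min)/(p_max - C_i). Then the normalization condition Σ_{v=0}^{V-1} d_v^1 · (C_v - p_min) = 1/(1+τ) holds, where C_v - p_min is the length of the charging price interval at level v, so the total probability mass of charging states equals 1/(1+τ). -/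
theorem stmt_8 (pmin pmax τ : ℝ) (V : ℕ) (C : ℕ → ℝ)
    (h : pmin < pmax) (hτ : 0 < τ) (hV : 1 ≤ V)
    (hC0 : C 0 = pmax)
    (hC1 : C 1 = (pmin + pmax) / 2)
    (hrec : ∀ v, 1 ≤ v → C (v + 1) = (pmin + pmax) / 2 - (pmax - C v) ^ 2 / (2 * (pmax - pmin)))
    (hbound : ∀ v, 1 ≤ v → v ≤ V - 1 → pmin < C v ∧ C v < pmax) :
    ∑ v ∈ Finset.range V,
        ((∏ i ∈ Finset.Icc 1 (V - 1), (pmax - C i)) / ((1 + τ) * (pmax - pmin) ^ V)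
          * ∏ i ∈ Finset.Icc 1 v, (pmax - pmin) / (pmax - C i))
        * (C v - pmin)
      = 1 / (1 + τ) := by
  have hd : (0:ℝ) < pmax - pmin := sub_pos.mpr h
  have hdne : pmax - pmin ≠ 0 := hd.ne'
  have hτne : (1:ℝ) + τ ≠ 0 := by positivity
  have hA : Finset.Icc 1 (V-1) = Finset.Ico 1 V := by
    rw [← Finset.Ico_add_one_right_eq_Icc]
    congr 1
    omega
  have hne : ∀ i ∈ Finset.Ico 1 V, pmax - C i ≠ 0 := by
    intro i hi
    rw [Finset.mem_Ico] at hi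
    have := (hbound i hi.1 (Nat.le_pred_of_lt hi.2)).2
    exact sub_ne_zero.mpr (ne_of_gt this)
  set Q : ℕ → ℝ := fun v => ∏ i ∈ Finset.Ico v V, ((pmax - C i)/(pmax - pmin)) with hQ
  have key : ∀ v ∈ Finset.range V,
      ((∏ i ∈ Finset.Icc 1 (V - 1), (pmax - C i)) / ((1 + τ) * (pmax - pmin) ^ V)
          * ∏ i ∈ Finset.Icc 1 v, (pmax - pmin) / (pmax - C i))
        * (C v - pmin) = (Q (v+1) - Q v)/(1+τ) := by
    intro v hv
    rw [Finset.mem_range] at hv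
    obtain ⟨k, hk⟩ := Nat.exists_eq_add_of_lt hv
    have hP1ne : (∏ i ∈ Finset.Icc 1 v, (pmax - C i)) ≠ 0 := by
      apply Finset.prod_ne_zero_iff.mpr
      intro i hi
      rw [Finset.mem_Icc] at hi
      exact hne i (Finset.mem_Ico.mpr ⟨hi.1, lt_of_le_of_lt hi.2 hv⟩)
    have hsplit : (∏ i ∈ Finset.Icc 1 v, (pmax - C i)) * ∏ i ∈ Finset.Ico (v+1) V, (pmax - C i)
        = ∏ i ∈ Finset.Ico 1 V, (pmax - C i) := by
      rw [← Finset.Ico_add_one_right_eq_Icc]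
      exact Finset.prod_Ico_consecutive _ (Nat.succ_le_succ (Nat.zero_le v)) hv
    have hQv : Q v = ((pmax - C v)/(pmax - pmin)) * Q (v+1) :=
      Finset.prod_eq_prod_Ico_succ_bot hv _
    have hQs : Q (v+1) = (∏ i ∈ Finset.Ico (v+1) V, (pmax - C i)) / (pmax - pmin)^k := by
      simp only [hQ]
      rw [Finset.prod_div_distrib, Finset.prod_const, Nat.card_Ico]
      congr 2
      omega
    have hP1 : ∏ i ∈ Finset.Icc 1 v, ((pmax - pmin) / (pmax - C i))
        = (pmax - pmin)^v / ∏ i ∈ Finset.Icc 1 v, (pmax - C i) := by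
      rw [Finset.prod_div_distrib, Finset.prod_const, Nat.card_Icc]
      norm_num
    rw [hA, ← hsplit, hQv, hQs, hP1, hk]
    have hP2ne : (∏ i ∈ Finset.Ico (v+1) V, (pmax - C i)) ≠ 0 := by
      apply Finset.prod_ne_zero_iff.mpr
      intro i hi
      rw [Finset.mem_Ico] at hi
      exact hne i (Finset.mem_Ico.mpr ⟨le_trans (Nat.succ_le_succ (Nat.zero_le v)) hi.1, hi.2⟩)
    field_simp
    ring
  rw [Finset.sum_congr rfl key, ← Finset.sum_div, Finset.sum_range_sub Q]
  have hQV : Q V = 1 := by simp [hQ]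
  have hQ0 : Q 0 = 0 := by
    apply Finset.prod_eq_zero (Finset.mem_Ico.mpr ⟨le_refl 0, hV⟩)
    rw [hC0]
    simp
  rw [hQV, hQ0, sub_zero]
end

section
/- Under the hypotheses p_min ≤ b ≤ 2·p_avg - p_min and p_avg > p_min, the optimal rebalanced average cost p_avg^r = b - (b - p_min)^2/(4(p_avg - p_min)) satisfies p_min ≤ p_avg^r ≤ min(b, p_avg), with p_avg^r = p_avg exactly when b = 2·p_avg - p_min, and p_avg^r = b exactly when b = p_min. -/
theorem stmt_10 (pmin pavg b : ℝ) (h : pmin < pavg)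
    (hb1 : pmin ≤ b) (hb2 : b ≤ 2 * pavg - pmin) :
    pmin ≤ b - (b - pmin) ^ 2 / (4 * (pavg - pmin)) ∧
    b - (b - pmin) ^ 2 / (4 * (pavg - pmin)) ≤ min b pavg ∧
    (b - (b - pmin) ^ 2 / (4 * (pavg - pmin)) = pavg ↔ b = 2 * pavg - pmin) ∧
    (b - (b - pmin) ^ 2 / (4 * (pavg - pmin)) = b ↔ b = pmin) := by
  have hd : (0:ℝ) < 4 * (pavg - pmin) := by linarith
  have hne : 4 * (pavg - pmin) ≠ 0 := ne_of_gt hd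
  refine ⟨?_, ?_, ?_, ?_⟩
  · rw [le_sub_comm, div_le_iff₀ hd]
    nlinarith [sq_nonneg (2*pavg - pmin - b)]
  · rw [le_min_iff]
    constructor
    · have : 0 ≤ (b - pmin)^2 / (4 * (pavg - pmin)) := div_nonneg (sq_nonneg _) hd.le
      linarith
    · rw [sub_le_iff_le_add, ← sub_le_iff_le_add', le_div_iff₀ hd]
      nlinarith [sq_nonneg (b - pmin - 2*(pavg - pmin))]
  · rw [sub_eq_iff_eq_add, ← sub_eq_iff_eq_add', eq_comm, div_eq_iff hne]
    constructor
    · intro hh; nlinarith [sq_nonneg (b - (2*pavg - pmin))]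
    · intro hh; subst hh; ring
  · rw [sub_eq_self, div_eq_zero_iff]
    constructor
    · rintro (hh | hh)
      · nlinarith [sq_nonneg (b - pmin)]
      · exact absurd hh hne
    · intro hh; left; rw [hh]; ring
end

section
/- Suppose real numbers λ_{ij}, ν_i^v (for nodes i,j and battery levels v) satisfy the dual feasibility constraints: ν_i^v - ν_i^{v+1} - p_i - β ≤ 0, λ_{ij} + ν_i^v - ν_j^{v-1} - τβ ≤ 0, and ν_i^v - ν_j^{v-1} - τβ ≤ 0 for all i, j, v (where applicable). Then for all i, j: λ_{ij} ≤ p_i + p_j + (2 + 2τ)β. -/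
theorem stmt_13 (m vmax : ℕ) (hvmax : 2 ≤ vmax)
    (p : Fin m → ℝ) (hp : ∀ i, 0 ≤ p i)
    (β τ : ℝ) (hβ : 0 < β) (hτ : 1 ≤ τ)
    (lam : Fin m → Fin m → ℝ) (ν : Fin m → ℕ → ℝ)
    (hcharge : ∀ (i : Fin m) (v : ℕ), v ≤ vmax - 1 →
      ν i v - ν i (v + 1) - p i - β ≤ 0)
    (htrip : ∀ (i j : Fin m) (v : ℕ), 1 ≤ v → v ≤ vmax →
      lam i j + ν i v - ν j (v - 1) - τ * β ≤ 0)
    (hreb : ∀ (i j : Fin m) (v : ℕ), 1 ≤ v → v ≤ vmax →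
      ν i v - ν j (v - 1) - τ * β ≤ 0) :
    ∀ i j, lam i j ≤ p i + p j + (2 + 2 * τ) * β := by
  intro i j
  have h1 := htrip i j 1 le_rfl (by omega)
  have h2 := hcharge j 0 (by omega)
  have h3 := hreb j i 1 le_rfl (by omega)
  have h4 := hcharge i 0 (by omega)
  norm_num at h1 h2 h3 h4
  linarith
end

section
/- Define C_1 = η and C_{v+1} = η - (p_max - C_v)^2/(2(p_max - p_min)) for v ≥ 1, where η = (p_min + p_max)/2 and p_min < p_max. Then the closed-form bound C_v ≤ p_min + 2(p_max - p_min)/(v + 1) holds for all v ≥ 1. -/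
theorem stmt_15 (pmin pmax : ℝ) (h : pmin < pmax) (C : ℕ → ℝ)
    (hC1 : C 1 = (pmin + pmax) / 2)
    (hrec : ∀ v, 1 ≤ v → C (v + 1) = (pmin + pmax) / 2 - (pmax - C v) ^ 2 / (2 * (pmax - pmin))) :
    ∀ v : ℕ, 1 ≤ v → C v ≤ pmin + 2 * (pmax - pmin) / (v + 1) := by
  have hΔ : (0:ℝ) < pmax - pmin := sub_pos.mpr h
  have aux : ∀ v : ℕ, 1 ≤ v →
      pmin ≤ C v ∧ C v ≤ pmin + 2 * (pmax - pmin) / (v + 1) := by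
    intro v hv
    induction v, hv using Nat.le_induction with
    | base =>
      rw [hC1]
      push_cast
      constructor <;> [linarith; linarith]
    | succ v hv ih =>
      obtain ⟨h1, h2⟩ := ih
      have hn : (1:ℝ) ≤ (v:ℝ) := by exact_mod_cast hv
      have hv1 : (0:ℝ) < (v:ℝ) + 1 := by linarith
      have hv2 : (0:ℝ) < (v:ℝ) + 2 := by linarith
      rw [hrec v hv]
      push_cast
      have hub : C v ≤ pmin + (pmax - pmin) := by
        have hd : 2 * (pmax - pmin) / ((v:ℝ) + 1) ≤ pmax - pmin := by
          rw [div_le_iff₀ hv1]; nlinarith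
        linarith
      have hA : ((v:ℝ) + 1) * (C v - pmin) ≤ 2 * (pmax - pmin) := by
        have hx : C v - pmin ≤ 2 * (pmax - pmin) / ((v:ℝ) + 1) := by linarith
        rw [le_div_iff₀ hv1] at hx
        linarith [hx]
      constructor
      · have hsq : (pmax - C v) ^ 2 ≤ (pmax - pmin) ^ 2 := by nlinarith
        have : (pmax - C v) ^ 2 / (2 * (pmax - pmin)) ≤ (pmax - pmin) / 2 := by
          rw [div_le_div_iff₀ (by linarith) (by norm_num)]; nlinarith
        linarith
      · rw [sub_le_iff_le_add, ← sub_le_iff_le_add']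
        have hkey : ((pmin + pmax) / 2 - (pmin + 2 * (pmax - pmin) / ((v:ℝ) + 1 + 1)))
            ≤ (pmax - C v) ^ 2 / (2 * (pmax - pmin)) := by
          rw [le_div_iff₀ (by linarith : (0:ℝ) < 2 * (pmax - pmin))]
          have e1 : 2 * (pmax - pmin) / ((v:ℝ) + 1 + 1) * (((v:ℝ) + 2))
              = 2 * (pmax - pmin) := by
            field_simp
            ring
          nlinarith [sq_nonneg (C v - pmin), sq_nonneg (2 * (pmax - pmin) - ((v:ℝ) + 1) * (C v - pmin)),
            mul_nonneg (mul_nonneg (by linarith : (0:ℝ) ≤ (v:ℝ)) (by linarith : (0:ℝ) ≤ C v - pmin))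
              (by linarith : (0:ℝ) ≤ 2 * (pmax - pmin) - ((v:ℝ) + 1) * (C v - pmin)),
            mul_pos hv2 hΔ, mul_nonneg (le_of_lt hv2) (sub_nonneg.mpr hA)]
        linarith
  intro v hv
  exact (aux v hv).2
end
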